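/- arXiv:2009.13713 — 2 statements merged into one kernel-verified Lean document; each statement's English description precedes it below -/
import Mathlib

section
/- Let X be a metric space with a finite Borel measure μ, f : X → X bijective, and B a measurable set containing no recurrent points of f with 0 < μ(B) < ∞. Then for every ε > 0 there exists a measurable set K ⊆ B and a finite number r ∈ ℕ such that μ(B ∖ K) < ε, K is a finite union of r sets each of which is a wandering set for f, and consequently ∑_{n∈ℤ} μ(fⁿ(K)) ≤ r·μ(X) < ∞. -/
open MeasureTheory Set Filter
open scoped ENNReal NNReal

/-- The image of a set under the `n`-th power (`n ∈ ℤ`) of a bijection `f`. -/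
def zimg {X : Type*} (f : X → X) (n : ℤ) (B : Set X) : Set X :=
  if 0 ≤ n then f^[n.toNat] '' B else f^[(-n).toNat] ⁻¹' B

/-- `W` is a wandering set for `f`: the sets `fⁿ(W)`, `n ∈ ℤ`, are pairwise disjoint. -/
def Wandering {X : Type*} (f : X → X) (W : Set X) : Prop :=
  Pairwise fun m n : ℤ => Disjoint (zimg f m W) (zimg f n W)

/-- `W` generates `X`: `X = ⋃_{n ∈ ℤ} fⁿ(W)`. -/
def GeneratedBy {X : Type*} (f : X → X) (W : Set X) : Prop :=
  (⋃ n : ℤ, zimg f n W) = Set.univ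

/-- The Summability Condition (SC). -/
def SCcond {X : Type*} [MeasurableSpace X] (μ : Measure X) (f : X → X) : Prop :=
  ∀ ε : ℝ≥0∞, 0 < ε → ∀ B : Set X, MeasurableSet B → μ B < ⊤ →
    ∃ B' : Set X, B' ⊆ B ∧ MeasurableSet B' ∧ μ (B \ B') < ε ∧
      ∑' n : ℤ, μ (zimg f n B') ≠ ⊤

/-- A measurable system: `μ` σ-finite with `μ(X) > 0`, `f` bijective, bimeasurable,
nonsingular, and `μ(f⁻¹(B)) ≤ c·μ(B)` with `0 < c < ∞`. -/
def MeasSystem {X : Type*} [MeasurableSpace X] (μ : Measure X) (f : X → X) (c : ℝ≥0∞) : Prop :=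
  SigmaFinite μ ∧ 0 < μ Set.univ ∧ Function.Bijective f ∧ Measurable f ∧
  (∀ B : Set X, MeasurableSet B → MeasurableSet (f '' B)) ∧
  (∀ B : Set X, MeasurableSet B → (μ (f ⁻¹' B) = 0 ↔ μ B = 0)) ∧
  0 < c ∧ c ≠ ⊤ ∧ (∀ B : Set X, MeasurableSet B → μ (f ⁻¹' B) ≤ c * μ B)

/-- `f` is dissipative: there is a generating wandering set. -/
def Dissipative {X : Type*} [MeasurableSpace X] (f : X → X) : Prop :=
  ∃ W : Set X, MeasurableSet W ∧ Wandering f W ∧ GeneratedBy f W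

/-- A set of natural numbers has positive lower density. -/
def PosLowerDensity (A : Set ℕ) : Prop :=
  0 < Filter.liminf (fun N : ℕ => ((A ∩ Set.Icc 1 N).ncard : ℝ) / N) Filter.atTop

/-- `x` is a recurrent point of `f`. -/
def Recurrent {X : Type*} [TopologicalSpace X] (f : X → X) (x : X) : Prop :=
  ∀ U : Set X, IsOpen U → x ∈ U → ∃ n : ℕ, 1 ≤ n ∧ f^[n] x ∈ U

/-- A continuous linear operator is frequently hypercyclic. -/
def FreqHC {E : Type*} [NormedAddCommGroup E] [NormedSpace ℝ E] (T : E →L[ℝ] E) : Prop :=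
  ∃ φ : E, ∀ U : Set E, IsOpen U → U.Nonempty → PosLowerDensity {n : ℕ | (T ^ n) φ ∈ U}

/-- `d(W) = ‖dμ/dν |_W‖_∞⁻¹`, with the convention `1/∞ = 0`. -/
noncomputable def dSeq {X : Type*} [MeasurableSpace X] (μ ν : Measure X) (W : Set X) : ℝ≥0∞ :=
  (essSup (μ.rnDeriv ν) (μ.restrict W))⁻¹

/-! Every point of `B` is non-recurrent, so it has a positive return gap: its forward orbit never
comes back within some `δ > 0` of it. By continuity of measure, on a compact `K₀ ⊆ B` of nearly
full measure a single gap `δ` works off a set of small measure. Cutting the resulting set into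
finitely many pieces of diameter `< δ` makes each piece wandering, since no forward iterate of a
point can return to its own piece; the translates of a wandering set are disjoint, so their
measures sum to at most `μ X`. -/

section Zimg

variable {X : Type*} {f : X → X}

theorem zimg_mono (n : ℤ) {V W : Set X} (h : V ⊆ W) : zimg f n V ⊆ zimg f n W := by
  unfold zimg
  split
  · exact image_mono h
  · exact preimage_mono h

theorem zimg_iUnion {ι : Sort*} (n : ℤ) (V : ι → Set X) :
    zimg f n (⋃ i, V i) = ⋃ i, zimg f n (V i) := by
  unfold zimg
  split
  · exact image_iUnion
  · exact preimage_iUnion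

theorem zimg_eq_image_zpow (hf : Function.Bijective f) (n : ℤ) (V : Set X) :
    zimg f n V = ⇑(Equiv.ofBijective f hf ^ n) '' V := by
  obtain ⟨k, rfl | rfl⟩ := Int.eq_nat_or_neg n
  · simp [zimg, Equiv.Perm.coe_pow]
  · rcases Nat.eq_zero_or_pos k with rfl | hk
    · simp [zimg]
    · rw [zimg, if_neg (by omega), zpow_neg, zpow_natCast, Equiv.Perm.inv_def,
        Equiv.image_symm_eq_preimage, Equiv.Perm.coe_pow]
      simp

theorem measurableSet_zimg [MeasurableSpace X] (hf : Measurable f)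
    (himg : ∀ B : Set X, MeasurableSet B → MeasurableSet (f '' B)) (n : ℤ) {V : Set X}
    (hV : MeasurableSet V) : MeasurableSet (zimg f n V) := by
  unfold zimg
  split
  · induction n.toNat with
    | zero => simpa using hV
    | succ k ih => simpa only [Function.iterate_succ', image_comp] using himg _ ih
  · exact hf.iterate _ hV

end Zimg

section Wandering

variable {X : Type*} {f : X → X}

theorem Wandering.mono {V W : Set X} (hW : Wandering f W) (h : V ⊆ W) : Wandering f V :=
  fun _ _ hmn => (hW hmn).mono (zimg_mono _ h) (zimg_mono _ h)

theorem wandering_of_forall_iterate_notMem (hf : Function.Bijective f) {V : Set X}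
    (h : ∀ k : ℕ, ∀ x ∈ V, f^[k + 1] x ∉ V) : Wandering f V := by
  suffices key : ∀ m n : ℤ, m < n → Disjoint (zimg f m V) (zimg f n V) from
    fun m n hmn => hmn.lt_or_gt.elim (key m n) fun h => (key n m h).symm
  intro m n hmn
  obtain ⟨k, hk⟩ : ∃ k : ℕ, n = m + (k + 1 : ℕ) := ⟨(n - m - 1).toNat, by omega⟩
  rw [zimg_eq_image_zpow hf, zimg_eq_image_zpow hf, hk, zpow_add, Equiv.Perm.coe_mul,
    image_comp, disjoint_image_iff (Equiv.ofBijective f hf ^ m).injective, zpow_natCast,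
    Equiv.Perm.coe_pow, disjoint_left]
  rintro _ hx ⟨y, hy, rfl⟩
  exact h k y hy hx

theorem Wandering.tsum_measure_zimg_le [MeasurableSpace X] (μ : Measure X) {V : Set X}
    (hV : Wandering f V) (hm : ∀ n, MeasurableSet (zimg f n V)) :
    ∑' n : ℤ, μ (zimg f n V) ≤ μ univ := by
  rw [← measure_iUnion hV hm]
  exact measure_mono (subset_univ _)

theorem tsum_measure_zimg_iUnion_le [MeasurableSpace X] (μ : Measure X) {ι : Type*}
    [Fintype ι] {V : ι → Set X} (hV : ∀ i, Wandering f (V i))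
    (hm : ∀ i n, MeasurableSet (zimg f n (V i))) :
    ∑' n : ℤ, μ (zimg f n (⋃ i, V i)) ≤ Fintype.card ι * μ univ :=
  calc ∑' n : ℤ, μ (zimg f n (⋃ i, V i))
      ≤ ∑' n : ℤ, ∑ i, μ (zimg f n (V i)) := by
        gcongr with n
        rw [zimg_iUnion]
        exact measure_iUnion_fintype_le _ _
    _ = ∑ i, ∑' n : ℤ, μ (zimg f n (V i)) :=
        Summable.tsum_finsetSum fun _ _ => ENNReal.summable
    _ ≤ ∑ _i : ι, μ univ := Finset.sum_le_sum fun i _ => (hV i).tsum_measure_zimg_le μ (hm i)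
    _ = Fintype.card ι * μ univ := by simp

end Wandering

section NoReturn

variable {X : Type*} [MetricSpace X] {f : X → X}

def noReturnSet (f : X → X) (δ : ℝ) : Set X :=
  {x | ∀ k : ℕ, δ ≤ dist (f^[k + 1] x) x}

theorem noReturnSet_antitone : Antitone (noReturnSet f) :=
  fun _ _ h _ hx k => h.trans (hx k)

theorem wandering_noReturnSet_inter_ball (hf : Function.Bijective f) (c : X) (r : ℝ) :
    Wandering f (noReturnSet f (2 * r) ∩ Metric.ball c r) := by
  refine wandering_of_forall_iterate_notMem hf fun k x ⟨hx, hxc⟩ ⟨_, hyc⟩ => ?_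
  have := dist_triangle_right (f^[k + 1] x) x c
  have := hx k
  rw [Metric.mem_ball] at hxc hyc
  linarith

theorem exists_mem_noReturnSet_of_not_recurrent {x : X} (hx : ¬ Recurrent f x) :
    ∃ m : ℕ, x ∈ noReturnSet f (1 / (m + 1)) := by
  simp only [Recurrent, not_forall, not_exists, not_and] at hx
  obtain ⟨U, hU, hxU, hnot⟩ := hx
  obtain ⟨ρ, hρ, hball⟩ := Metric.isOpen_iff.mp hU x hxU
  obtain ⟨m, hm⟩ := exists_nat_one_div_lt hρ
  exact ⟨m, fun k => not_lt.mp fun hlt => hnot (k + 1) k.succ_pos (hball (hlt.trans hm))⟩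

variable [MeasurableSpace X] [BorelSpace X]

/-- `g` need not be continuous and `X` need not be separable; on a separable `S` the map
`(x, y) ↦ dist y x` is continuous in `x` and measurable in `y`, hence jointly measurable. -/
theorem measurableSet_inter_dist_lt {S : Set X} (hS : MeasurableSet S)
    (hsep : TopologicalSpace.IsSeparable S) {g : X → X} (hg : Measurable g) (δ : ℝ) :
    MeasurableSet (S ∩ {x | dist (g x) x < δ}) := by
  have : TopologicalSpace.SeparableSpace S := hsep.separableSpace
  have hd : Measurable fun x : S => dist (g x) (x : X) :=
    (measurable_uncurry_of_continuous_of_measurable (u := fun (i : S) (y : X) => dist y i)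
      (fun _ => continuous_const.dist continuous_subtype_val)
      (fun _ => (continuous_id.dist continuous_const).measurable)).comp
      (measurable_id.prodMk (hg.comp measurable_subtype_coe))
  convert hS.subtype_image (hd (measurableSet_Iio (a := δ))) using 1
  ext x
  simp [and_comm]

theorem measurableSet_inter_noReturnSet {S : Set X} (hS : MeasurableSet S)
    (hsep : TopologicalSpace.IsSeparable S) (hf : Measurable f) (δ : ℝ) :
    MeasurableSet (S ∩ noReturnSet f δ) := by
  have : S ∩ noReturnSet f δ = ⋂ k : ℕ, S \ (S ∩ {x | dist (f^[k + 1] x) x < δ}) := by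
    ext x
    simp only [noReturnSet, mem_inter_iff, mem_ofPred_eq, mem_iInter, Set.mem_sdiff, not_and,
      not_lt]
    exact ⟨fun ⟨hS, h⟩ k => ⟨hS, fun _ => h k⟩,
      fun h => ⟨(h 0).1, fun k => (h k).2 (h k).1⟩⟩
  rw [this]
  exact .iInter fun k => hS.diff (measurableSet_inter_dist_lt hS hsep (hf.iterate _) δ)

theorem exists_measure_diff_noReturnSet_lt (μ : Measure X) {S : Set X} (hμS : μ S ≠ ⊤)
    (hS : MeasurableSet S) (hsep : TopologicalSpace.IsSeparable S) (hf : Measurable f)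
    (hS_rec : ∀ x ∈ S, ¬ Recurrent f x) {ε : ℝ≥0∞} (hε : 0 < ε) :
    ∃ δ > 0, μ (S \ noReturnSet f δ) < ε := by
  set s : ℕ → Set X := fun m => S \ noReturnSet f (1 / (m + 1))
  have hs_meas (m : ℕ) : MeasurableSet (s m) := by
    simpa [s, sdiff_self_inter] using
      hS.diff (measurableSet_inter_noReturnSet hS hsep hf (1 / (m + 1)))
  have hs_anti : Antitone s := fun a b hab =>
    sdiff_subset_sdiff_right (noReturnSet_antitone (Nat.one_div_le_one_div hab))
  have hs_empty : ⋂ m, s m = ∅ := by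
    refine eq_empty_of_forall_notMem fun x hx => ?_
    rw [mem_iInter] at hx
    obtain ⟨m, hm⟩ := exists_mem_noReturnSet_of_not_recurrent (hS_rec x (hx 0).1)
    exact (hx m).2 hm
  have hlim := tendsto_measure_iInter_atTop (μ := μ) (fun m => (hs_meas m).nullMeasurableSet)
    hs_anti ⟨0, ne_top_of_le_ne_top hμS (measure_mono sdiff_subset)⟩
  rw [hs_empty, measure_empty] at hlim
  obtain ⟨m, hm⟩ := (hlim.eventually_lt_const hε).exists
  exact ⟨1 / (m + 1), by positivity, hm⟩

theorem exists_wandering_cover (hf : Function.Bijective f) {K : Set X} (hK : TotallyBounded K)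
    (hKm : MeasurableSet K) {δ : ℝ} (hδ : 0 < δ) (hK_sub : K ⊆ noReturnSet f δ) :
    ∃ (r : ℕ) (V : Fin r → Set X),
      K = ⋃ i, V i ∧ ∀ i, MeasurableSet (V i) ∧ Wandering f (V i) := by
  obtain ⟨t, ht, hKt⟩ := Metric.totallyBounded_iff.mp hK (δ / 2) (half_pos hδ)
  have := ht.to_subtype
  obtain ⟨r, ⟨e⟩⟩ := Finite.exists_equiv_fin t
  refine ⟨r, fun i => K ∩ Metric.ball (e.symm i) (δ / 2), ?_, fun i => ⟨?_, ?_⟩⟩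
  · refine (iUnion_subset fun i => inter_subset_left).antisymm' fun x hx => ?_
    obtain ⟨c, hc, hxc⟩ := mem_iUnion₂.mp (hKt hx)
    exact mem_iUnion.mpr ⟨e ⟨c, hc⟩, hx, by simpa using hxc⟩
  · exact hKm.inter measurableSet_ball
  · refine (wandering_noReturnSet_inter_ball hf (e.symm i : X) (δ / 2)).mono ?_
    rw [mul_div_cancel₀ δ two_ne_zero]
    exact inter_subset_inter_left _ hK_sub

end NoReturn

theorem stmt_3_general {X : Type*} [MetricSpace X] [MeasurableSpace X] [BorelSpace X]
    (μ : Measure X) (hfin : μ Set.univ ≠ ⊤) (f : X → X) (hbij : Function.Bijective f)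
    (hmeas : Measurable f) (himg : ∀ B : Set X, MeasurableSet B → MeasurableSet (f '' B))
    (B : Set X) (hnorec : ∀ x ∈ B, ¬ Recurrent f x)
    (hreg : ∀ ε : ℝ≥0∞, 0 < ε →
      ∃ K : Set X, K ⊆ B ∧ IsCompact K ∧ MeasurableSet K ∧ μ (B \ K) < ε) :
    ∀ ε : ℝ≥0∞, 0 < ε → ∃ (K : Set X) (r : ℕ) (V : Fin r → Set X),
      K ⊆ B ∧ MeasurableSet K ∧ μ (B \ K) < ε ∧ K = ⋃ i, V i ∧
      (∀ i, Wandering f (V i)) ∧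
      (∑' n : ℤ, μ (zimg f n K)) ≤ (r : ℝ≥0∞) * μ Set.univ ∧
      (r : ℝ≥0∞) * μ Set.univ ≠ ⊤ := by
  intro ε hε
  have : IsFiniteMeasure μ := ⟨hfin.lt_top⟩
  obtain ⟨K₀, hK₀B, hK₀c, hK₀m, hK₀ε⟩ := hreg (ε / 2) (ENNReal.half_pos hε.ne')
  obtain ⟨δ, hδ, hδε⟩ :=
    exists_measure_diff_noReturnSet_lt μ (measure_ne_top μ K₀) hK₀m hK₀c.isSeparable hmeas
      (fun x hx => hnorec x (hK₀B hx)) (ENNReal.half_pos hε.ne')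
  have hKm : MeasurableSet (K₀ ∩ noReturnSet f δ) :=
    measurableSet_inter_noReturnSet hK₀m hK₀c.isSeparable hmeas δ
  obtain ⟨r, V, hKV, hV⟩ := exists_wandering_cover hbij
    (hK₀c.totallyBounded.subset inter_subset_left) hKm hδ inter_subset_right
  refine ⟨K₀ ∩ noReturnSet f δ, r, V, inter_subset_left.trans hK₀B, hKm, ?_, hKV,
    fun i => (hV i).2, ?_, ENNReal.mul_ne_top (ENNReal.natCast_ne_top r) hfin⟩
  · calc μ (B \ (K₀ ∩ noReturnSet f δ)) ≤ μ (B \ K₀ ∪ K₀ \ noReturnSet f δ) := by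
          refine measure_mono fun x ⟨hxB, hxK⟩ => ?_
          by_cases hx : x ∈ K₀
          · exact Or.inr ⟨hx, fun h => hxK ⟨hx, h⟩⟩
          · exact Or.inl ⟨hxB, hx⟩
      _ ≤ μ (B \ K₀) + μ (K₀ \ noReturnSet f δ) := measure_union_le _ _
      _ < ε / 2 + ε / 2 := ENNReal.add_lt_add hK₀ε hδε
      _ = ε := ENNReal.add_halves ε
  · rw [hKV]
    simpa using tsum_measure_zimg_iUnion_le μ (fun i => (hV i).2)
      fun i n => measurableSet_zimg hmeas himg n (hV i).1

/-- If `B` is a measurable set of finite positive measure containing no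
recurrent points of a bijective bimeasurable `f` (with `μ` finite Borel, inner regular on
`B`), then for each `ε > 0` there is a measurable `K ⊆ B` with `μ(B∖K) < ε` which is a
finite union of `r` wandering sets, so that `∑_{n∈ℤ} μ(fⁿ(K)) ≤ r·μ(X) < ∞`. -/
theorem stmt_3 {X : Type*} [MetricSpace X] [MeasurableSpace X] [BorelSpace X]
    (μ : Measure X) (hfin : μ Set.univ ≠ ⊤) (f : X → X) (hbij : Function.Bijective f)
    (hmeas : Measurable f) (himg : ∀ B : Set X, MeasurableSet B → MeasurableSet (f '' B))
    (B : Set X) (hB : MeasurableSet B) (hBpos : 0 < μ B) (hBfin : μ B ≠ ⊤)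
    (hnorec : ∀ x ∈ B, ¬ Recurrent f x)
    (hreg : ∀ ε : ℝ≥0∞, 0 < ε →
      ∃ K : Set X, K ⊆ B ∧ IsCompact K ∧ MeasurableSet K ∧ μ (B \ K) < ε) :
    ∀ ε : ℝ≥0∞, 0 < ε → ∃ (K : Set X) (r : ℕ) (V : Fin r → Set X),
      K ⊆ B ∧ MeasurableSet K ∧ μ (B \ K) < ε ∧ K = ⋃ i, V i ∧
      (∀ i, Wandering f (V i)) ∧
      (∑' n : ℤ, μ (zimg f n K)) ≤ (r : ℝ≥0∞) * μ Set.univ ∧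
      (r : ℝ≥0∞) * μ Set.univ ≠ ⊤ :=
  stmt_3_general μ hfin f hbij hmeas himg B hnorec hreg
end

section
/- Let (X, B, μ, f) be a measurable system, p ≥ 1, W a wandering set with 0 < μ(W) < ∞, and φ ∈ L^p(X) a frequently hypercyclic vector for T_f. Let A = { n ∈ ℕ : ‖T_fⁿφ − χ_W‖_p^p < μ(W)/2^p }. Then A has positive lower density and for each n ∈ A, ∑_{m∈A} ‖ dμ/d(μ∘f^{m−n}) |_W ‖_∞^{-1} < 2. -/
open MeasureTheory Set Filter
open scoped ENNReal NNReal

/-!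
`A` is the set of times at which the orbit of `φ` visits an open neighbourhood of `χ_W`, so it
has positive lower density. Fix `n ∈ A` and put `g = |T_fⁿφ - χ_W|^p`, so `∫ g dμ < μ(W)/2^p`.
For `m ∈ A`, Minkowski's inequality on `W` gives `∫_W |T_fᵐφ|^p dμ ≥ μ(W)/2^p`. On `W` the density
`dμ/d(μ∘f^{m-n})` is at most `d_{m-n}⁻¹`, where `d_k = ‖dμ/d(μ∘fᵏ)|_W‖_∞⁻¹`, and the substitution
`x ↦ f^{n-m}(x)` turns `∫_W |T_fᵐφ|^p d(μ∘f^{m-n})` into `∫_{f^{m-n}(W)} |T_fⁿφ|^p dμ`. As `W` is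
wandering, the sets `f^{m-n}(W)`, `m ≠ n`, are pairwise disjoint and miss `W`, so `g = |T_fⁿφ|^p`
on them and `∑_{m ≠ n} d_{m-n} μ(W)/2^p ≤ ∫ g dμ < μ(W)/2^p`; finally `d_0 = 1`.
-/

open Function (onFun)

section

variable {X : Type*}

theorem zimg_eq_preimage_zpow (σ : Equiv.Perm X) (k : ℤ) (B : Set X) :
    zimg σ k B = ⇑(σ ^ (-k)) ⁻¹' B := by
  unfold zimg
  split_ifs with hk
  · lift k to ℕ using hk
    rw [Int.toNat_natCast, zpow_neg, zpow_natCast, ← Equiv.Perm.coe_pow]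
    exact Equiv.image_eq_preimage_symm _ _
  · obtain ⟨j, rfl⟩ : ∃ j : ℕ, k = -j := ⟨(-k).toNat, by omega⟩
    rw [neg_neg, Int.toNat_natCast, zpow_natCast, Equiv.Perm.coe_pow]

variable [MeasurableSpace X] {μ : Measure X}

def nonsingularPerms (μ : Measure X) : Subgroup (Equiv.Perm X) where
  carrier := {σ | Measure.QuasiMeasurePreserving σ μ μ ∧ Measure.QuasiMeasurePreserving ⇑σ⁻¹ μ μ}
  mul_mem' {a b} ha hb := by
    refine ⟨ha.1.comp hb.1, ?_⟩
    rw [mul_inv_rev]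
    exact hb.2.comp ha.2
  one_mem' := ⟨.id μ, .id μ⟩
  inv_mem' {a} ha := ⟨ha.2, by rw [inv_inv]; exact ha.1⟩

theorem MeasSystem.mem_nonsingularPerms {σ : Equiv.Perm X} {c : ℝ≥0∞} (hsys : MeasSystem μ σ c) :
    σ ∈ nonsingularPerms μ := by
  obtain ⟨-, -, -, hmeas, himg, hnull, -⟩ := hsys
  have hmeas_inv : Measurable ⇑σ⁻¹ := fun B hB => by
    rw [Equiv.Perm.inv_def, ← Equiv.image_eq_preimage_symm]
    exact himg B hB
  refine ⟨⟨hmeas, .mk fun B hB hB0 => ?_⟩, ⟨hmeas_inv, .mk fun B hB hB0 => ?_⟩⟩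
  · rw [Measure.map_apply hmeas hB]
    exact (hnull B hB).2 hB0
  · rw [Measure.map_apply hmeas_inv hB, Equiv.Perm.inv_def, ← Equiv.image_eq_preimage_symm,
      ← hnull _ (himg B hB), Equiv.preimage_image]
    exact hB0

theorem measurableSet_zimg_s7 {σ : Equiv.Perm X} (hσ : σ ∈ nonsingularPerms μ) (k : ℤ) {B : Set X}
    (hB : MeasurableSet B) : MeasurableSet (zimg σ k B) := by
  rw [zimg_eq_preimage_zpow]
  exact (zpow_mem hσ _).1.measurable hB

theorem map_zpow_neg_eq {σ : Equiv.Perm X} (hσ : σ ∈ nonsingularPerms μ) {ν : ℤ → Measure X}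
    (hν : ∀ k B, MeasurableSet B → ν k B = μ (zimg σ k B)) (k : ℤ) :
    ν k = μ.map ⇑(σ ^ (-k)) := by
  ext B hB
  rw [hν k B hB, Measure.map_apply (zpow_mem hσ _).1.measurable hB, zimg_eq_preimage_zpow]

theorem dSeq_self [SigmaFinite μ] {W : Set X} (hW : μ W ≠ 0) : dSeq μ μ W = 1 := by
  rw [dSeq, essSup_congr_ae (ae_restrict_of_ae (Measure.rnDeriv_self μ)),
    essSup_const _ (by simpa using hW), inv_one]

theorem dSeq_mul_setLIntegral_le {ν : Measure X} [μ.HaveLebesgueDecomposition ν] (hμν : μ ≪ ν)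
    (hνμ : ν ≪ μ) {W : Set X} (hW : MeasurableSet W) {h : X → ℝ≥0∞} (hh : AEMeasurable h ν) :
    dSeq μ ν W * ∫⁻ x in W, h x ∂μ ≤ ∫⁻ x in W, h x ∂ν := by
  set E := essSup (μ.rnDeriv ν) (μ.restrict W)
  have hbound : ∀ᵐ x ∂ν.restrict W, μ.rnDeriv ν x ≤ E :=
    (hνμ.restrict W).ae_le ae_le_essSup
  calc dSeq μ ν W * ∫⁻ x in W, h x ∂μ
      = E⁻¹ * ∫⁻ x in W, μ.rnDeriv ν x * h x ∂ν := by
        rw [setLIntegral_rnDeriv_mul hμν hh hW]; rfl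
    _ ≤ E⁻¹ * ∫⁻ x in W, E * h x ∂ν := by
        gcongr E⁻¹ * ?_
        exact lintegral_mono_ae (hbound.mono fun x hx => by gcongr)
    _ = E⁻¹ * E * ∫⁻ x in W, h x ∂ν := by
        rw [lintegral_const_mul'' _ hh.restrict, mul_assoc]
    _ ≤ ∫⁻ x in W, h x ∂ν := mul_le_of_le_one_left' (ENNReal.inv_mul_le_one E)

theorem dSeq_map_mul_setLIntegral_le [SigmaFinite μ] {τ : Equiv.Perm X}
    (hτ : τ ∈ nonsingularPerms μ) {W : Set X} (hW : MeasurableSet W) {h : X → ℝ≥0∞}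
    (hh : Measurable h) :
    dSeq μ (μ.map τ) W * ∫⁻ x in W, h x ∂μ ≤ ∫⁻ x in τ ⁻¹' W, h (τ x) ∂μ := by
  let e : X ≃ᵐ X := ⟨τ, hτ.1.measurable, hτ.2.measurable⟩
  have : SigmaFinite (μ.map τ) := e.sigmaFinite_map
  have hμ : μ ≪ μ.map τ := .mk fun B hB hB0 => by
    rw [Measure.map_apply hτ.1.measurable hB] at hB0
    have := hτ.2.preimage_null hB0
    rwa [← Set.preimage_comp, ← Equiv.Perm.coe_mul, mul_inv_cancel, Equiv.Perm.coe_one,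
      Set.preimage_id] at this
  rw [← setLIntegral_map hW hh hτ.1.measurable]
  exact dSeq_mul_setLIntegral_le hμ hτ.1.absolutelyContinuous hW hh.aemeasurable

theorem tsum_lt_one_of_mul_le_setLIntegral {ι : Type*} [Countable ι] {S : ι → Set X}
    (hS : Pairwise (onFun Disjoint S)) (hSm : ∀ i, MeasurableSet (S i)) {g : X → ℝ≥0∞}
    {a : ι → ℝ≥0∞} {δ : ℝ≥0∞} (ha : ∀ i, a i * δ ≤ ∫⁻ x in S i, g x ∂μ)
    (hg : ∫⁻ x, g x ∂μ < δ) : ∑' i, a i < 1 := by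
  by_contra! h1
  refine hg.not_ge ?_
  calc δ ≤ (∑' i, a i) * δ := le_mul_of_one_le_left' h1
    _ = ∑' i, a i * δ := ENNReal.tsum_mul_right.symm
    _ ≤ ∑' i, ∫⁻ x in S i, g x ∂μ := ENNReal.tsum_le_tsum ha
    _ = ∫⁻ x in ⋃ i, S i, g x ∂μ := (lintegral_iUnion hSm hS g).symm
    _ ≤ ∫⁻ x, g x ∂μ := setLIntegral_le_lintegral _ _

theorem eLpNorm_rpow_toReal_eq_lintegral {E : Type*} [NormedAddCommGroup E] {p : ℝ≥0∞}
    (hp0 : p ≠ 0) (hp : p ≠ ⊤) (u : X → E) :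
    eLpNorm u p μ ^ p.toReal = ∫⁻ x, ‖u x‖ₑ ^ p.toReal ∂μ := by
  rw [eLpNorm_eq_eLpNorm' hp0 hp, lintegral_rpow_enorm_eq_rpow_eLpNorm' (ENNReal.toReal_pos hp0 hp)]

theorem norm_sub_indicatorConstLp_rpow_lt_iff {p : ℝ≥0∞} [Fact (1 ≤ p)] (hp : p ≠ ⊤)
    {W : Set X} (hW : MeasurableSet W) (hWfin : μ W ≠ ⊤) (ψ : Lp ℝ p μ) :
    ‖ψ - indicatorConstLp p hW hWfin (1 : ℝ)‖ ^ p.toReal < (μ W).toReal / 2 ^ p.toReal ↔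
      ∫⁻ x, ‖ψ x - W.indicator 1 x‖ₑ ^ p.toReal ∂μ < μ W / 2 ^ p.toReal := by
  have hp0 : p ≠ 0 := (zero_lt_one.trans_le Fact.out).ne'
  have hcoe : ⇑(ψ - indicatorConstLp p hW hWfin (1 : ℝ)) =ᵐ[μ] fun x => ψ x - W.indicator 1 x := by
    filter_upwards [Lp.coeFn_sub ψ (indicatorConstLp p hW hWfin (1 : ℝ)),
      indicatorConstLp_coeFn (p := p) (hs := hW) (hμs := hWfin) (c := (1 : ℝ))] with x h1 h2
    rw [h1, Pi.sub_apply, h2]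
    rfl
  have hint : ∫⁻ x, ‖ψ x - W.indicator 1 x‖ₑ ^ p.toReal ∂μ =
      ‖ψ - indicatorConstLp p hW hWfin (1 : ℝ)‖ₑ ^ p.toReal := by
    rw [Lp.enorm_def, eLpNorm_rpow_toReal_eq_lintegral hp0 hp]
    exact lintegral_congr_ae (hcoe.symm.fun_comp fun y => ‖y‖ₑ ^ p.toReal)
  rw [hint, ← ENNReal.toReal_lt_toReal (by simp [ENNReal.toReal_nonneg])
      (ENNReal.div_ne_top hWfin (by simp)), ← ENNReal.toReal_rpow, toReal_enorm,
    ENNReal.toReal_div, ← ENNReal.toReal_rpow, ENNReal.toReal_ofNat]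

theorem measure_div_rpow_le_setLIntegral {p : ℝ≥0∞} (hp1 : 1 ≤ p) (hp : p ≠ ⊤) {W : Set X}
    (hW : MeasurableSet W) {u : X → ℝ} (hu : AEStronglyMeasurable u μ)
    (h : ∫⁻ x, ‖u x - W.indicator 1 x‖ₑ ^ p.toReal ∂μ < μ W / 2 ^ p.toReal) :
    μ W / 2 ^ p.toReal ≤ ∫⁻ x in W, ‖u x‖ₑ ^ p.toReal ∂μ := by
  have hp0 : p ≠ 0 := (zero_lt_one.trans_le hp1).ne'
  have hr : 0 < p.toReal := ENNReal.toReal_pos hp0 hp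
  set a := eLpNorm (fun x => u x - 1) p (μ.restrict W)
  set b := eLpNorm u p (μ.restrict W)
  set c := eLpNorm (fun _ => (1 : ℝ)) p (μ.restrict W)
  have hc : μ W / 2 ^ p.toReal = (c / 2) ^ p.toReal := by
    rw [ENNReal.div_rpow_of_nonneg _ _ hr.le, eLpNorm_rpow_toReal_eq_lintegral hp0 hp]
    simp
  have hac : a < c / 2 := by
    rw [← ENNReal.rpow_lt_rpow_iff hr, ← hc, eLpNorm_rpow_toReal_eq_lintegral hp0 hp]
    refine lt_of_le_of_lt ?_ h
    calc ∫⁻ x in W, ‖u x - 1‖ₑ ^ p.toReal ∂μ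
        = ∫⁻ x in W, ‖u x - W.indicator 1 x‖ₑ ^ p.toReal ∂μ :=
          setLIntegral_congr_fun hW fun x hx => by rw [indicator_of_mem hx, Pi.one_apply]
      _ ≤ ∫⁻ x, ‖u x - W.indicator 1 x‖ₑ ^ p.toReal ∂μ := setLIntegral_le_lintegral _ _
  have hcab : c ≤ b + a :=
    calc c = eLpNorm (u - fun x => u x - 1) p (μ.restrict W) := by
          rw [show (u - fun x => u x - 1) = fun _ => (1 : ℝ) by ext x; simp]
      _ ≤ b + a := eLpNorm_sub_le hu.restrict (hu.restrict.sub aestronglyMeasurable_const) hp1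
  have hcb : c / 2 ≤ b := by
    by_contra! hbc
    have := ENNReal.add_lt_add hbc hac
    rw [ENNReal.add_halves] at this
    exact this.not_ge hcab
  rw [hc, ← eLpNorm_rpow_toReal_eq_lintegral hp0 hp]
  exact ENNReal.rpow_le_rpow hcb hr.le

section CompositionOperator

variable {𝕜 E : Type*} [NormedField 𝕜] [NormedAddCommGroup E] [NormedSpace 𝕜 E] {p : ℝ≥0∞}
  [Fact (1 ≤ p)] {T : Lp E p μ →L[𝕜] Lp E p μ}

theorem pow_apply_ae_eq_comp_iterate {g : X → X} (hg : Measure.QuasiMeasurePreserving g μ μ)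
    (hT : ∀ ψ : Lp E p μ, (T ψ : X → E) =ᵐ[μ] ψ ∘ g) (n : ℕ) (ψ : Lp E p μ) :
    ((T ^ n) ψ : X → E) =ᵐ[μ] ψ ∘ g^[n] := by
  induction n with
  | zero => rfl
  | succ n ih =>
    rw [pow_succ', Function.iterate_succ, ← Function.comp_assoc]
    exact (hT ((T ^ n) ψ)).trans (hg.ae_eq_comp ih)

theorem pow_apply_comp_zpow_sub_ae_eq {σ : Equiv.Perm X} (hσ : σ ∈ nonsingularPerms μ)
    (hT : ∀ ψ : Lp E p μ, (T ψ : X → E) =ᵐ[μ] ψ ∘ σ) (m n : ℕ) (ψ : Lp E p μ) :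
    ((T ^ m) ψ : X → E) ∘ ⇑(σ ^ ((n : ℤ) - m)) =ᵐ[μ] (T ^ n) ψ := by
  have hpow (j : ℕ) : ((T ^ j) ψ : X → E) =ᵐ[μ] ψ ∘ ⇑(σ ^ j) := by
    rw [Equiv.Perm.coe_pow]
    exact pow_apply_ae_eq_comp_iterate hσ.1 hT j ψ
  refine ((zpow_mem hσ _).1.ae_eq_comp (hpow m)).trans ?_
  rw [Function.comp_assoc, ← Equiv.Perm.coe_mul, ← zpow_natCast, ← zpow_add, add_sub_cancel,
    zpow_natCast]
  exact (hpow n).symm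

end CompositionOperator

theorem dSeq_mul_le_setLIntegral_zimg [SigmaFinite μ] {σ : Equiv.Perm X}
    (hσ : σ ∈ nonsingularPerms μ) {p : ℝ≥0∞} [Fact (1 ≤ p)] {T : Lp ℝ p μ →L[ℝ] Lp ℝ p μ}
    (hT : ∀ ψ : Lp ℝ p μ, (T ψ : X → ℝ) =ᵐ[μ] ψ ∘ σ) {W : Set X} (hW : MeasurableSet W)
    (hWw : Wandering σ W) (q : ℝ) (φ : Lp ℝ p μ) {m n : ℕ} (hmn : m ≠ n) {δ : ℝ≥0∞}
    (hm : δ ≤ ∫⁻ x in W, ‖(T ^ m) φ x‖ₑ ^ q ∂μ) :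
    dSeq μ (μ.map ⇑(σ ^ (-((m : ℤ) - n)))) W * δ ≤
      ∫⁻ x in zimg σ ((m : ℤ) - n) W, ‖(T ^ n) φ x - W.indicator 1 x‖ₑ ^ q ∂μ := by
  set τ := σ ^ (-((m : ℤ) - n))
  have hWτ : zimg σ ((m : ℤ) - n) W = τ ⁻¹' W := zimg_eq_preimage_zpow σ _ W
  have hdisj : Disjoint (zimg σ ((m : ℤ) - n) W) W := by
    simpa [zimg] using hWw (i := (m : ℤ) - n) (j := 0) (by omega)
  calc dSeq μ (μ.map τ) W * δ ≤ dSeq μ (μ.map τ) W * ∫⁻ x in W, ‖(T ^ m) φ x‖ₑ ^ q ∂μ := by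
        gcongr
    _ ≤ ∫⁻ x in τ ⁻¹' W, ‖(T ^ m) φ (τ x)‖ₑ ^ q ∂μ :=
        dSeq_map_mul_setLIntegral_le (zpow_mem hσ _) hW (by fun_prop)
    _ = ∫⁻ x in zimg σ ((m : ℤ) - n) W, ‖(T ^ n) φ x‖ₑ ^ q ∂μ := by
        have hτ : τ = σ ^ ((n : ℤ) - m) := by simp only [τ, neg_sub]
        rw [hWτ]
        refine lintegral_congr_ae (ae_restrict_of_ae ?_)
        filter_upwards [pow_apply_comp_zpow_sub_ae_eq hσ hT m n φ] with x hx
        rw [← hx, hτ]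
        rfl
    _ = ∫⁻ x in zimg σ ((m : ℤ) - n) W, ‖(T ^ n) φ x - W.indicator 1 x‖ₑ ^ q ∂μ :=
        setLIntegral_congr_fun (measurableSet_zimg_s7 hσ _ hW) fun x hx => by
          rw [indicator_of_notMem (hdisj.notMem_of_mem_left hx), sub_zero]


theorem tsum_dSeq_map_zpow_lt_two [SigmaFinite μ] {σ : Equiv.Perm X}
    (hσ : σ ∈ nonsingularPerms μ) {p : ℝ≥0∞} [Fact (1 ≤ p)] (hp : p ≠ ⊤)
    {T : Lp ℝ p μ →L[ℝ] Lp ℝ p μ} (hT : ∀ ψ : Lp ℝ p μ, (T ψ : X → ℝ) =ᵐ[μ] ψ ∘ σ) {W : Set X}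
    (hW : MeasurableSet W) (hWw : Wandering σ W) (hW0 : μ W ≠ 0) (φ : Lp ℝ p μ) {A : Set ℕ}
    (hA : ∀ m ∈ A, ∫⁻ x, ‖(T ^ m) φ x - W.indicator 1 x‖ₑ ^ p.toReal ∂μ < μ W / 2 ^ p.toReal)
    {n : ℕ} (hn : n ∈ A) :
    ∑' m : A, dSeq μ (μ.map ⇑(σ ^ (-((m : ℤ) - n)))) W < 2 := by
  have hrest : ∑' m : A, (if m = ⟨n, hn⟩ then 0 else
      dSeq μ (μ.map ⇑(σ ^ (-((m : ℤ) - n)))) W) < 1 := by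
    refine tsum_lt_one_of_mul_le_setLIntegral (S := fun m : A => zimg σ ((m : ℤ) - n) W)
      (fun i j hij => hWw (by simpa [Subtype.ext_iff] using hij))
      (fun _ => measurableSet_zimg_s7 hσ _ hW) (fun m => ?_) (hA n hn)
    split_ifs with hmn
    · simp
    · exact dSeq_mul_le_setLIntegral_zimg hσ hT hW hWw _ φ (by simpa [Subtype.ext_iff] using hmn)
        (measure_div_rpow_le_setLIntegral Fact.out hp hW (Lp.aestronglyMeasurable _) (hA m m.2))
  rw [ENNReal.tsum_eq_add_tsum_ite ⟨n, hn⟩]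
  simp only [sub_self, neg_zero, zpow_zero, Equiv.Perm.coe_one, Measure.map_id, dSeq_self hW0]
  convert (ENNReal.add_lt_add_left ENNReal.one_ne_top hrest).trans_eq one_add_one_eq_two

end

/-- If `φ` is a frequently hypercyclic vector for the composition operator
`T_f` and `W` is a wandering set of finite positive measure, then
`A = {n : ‖T_fⁿφ − χ_W‖_p^p < μ(W)/2^p}` has positive lower density and for each `n ∈ A`,
`∑_{m∈A} ‖dμ/d(μ∘f^{m−n})|_W‖_∞⁻¹ < 2`. -/
theorem stmt_7 {X : Type*} [MeasurableSpace X] (μ : Measure X) (f : X → X) (c : ℝ≥0∞)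
    (hsys : MeasSystem μ f c) (p : ℝ≥0∞) [Fact (1 ≤ p)] (hp : p ≠ ⊤)
    (T : Lp ℝ p μ →L[ℝ] Lp ℝ p μ)
    (hT : ∀ ψ : Lp ℝ p μ, (T ψ : X → ℝ) =ᵐ[μ] fun x => (ψ : X → ℝ) (f x))
    (ν : ℤ → Measure X) (hν : ∀ (n : ℤ) (B : Set X), MeasurableSet B → ν n B = μ (zimg f n B))
    (W : Set X) (hWm : MeasurableSet W) (hWw : Wandering f W)
    (hW0 : 0 < μ W) (hWfin : μ W ≠ ⊤)
    (φ : Lp ℝ p μ)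
    (hφ : ∀ U : Set (Lp ℝ p μ), IsOpen U → U.Nonempty → PosLowerDensity {n : ℕ | (T ^ n) φ ∈ U})
    (A : Set ℕ)
    (hA : A = {n : ℕ | ‖(T ^ n) φ - indicatorConstLp p hWm hWfin (1 : ℝ)‖ ^ p.toReal
      < (μ W).toReal / 2 ^ p.toReal}) :
    PosLowerDensity A ∧
      ∀ n ∈ A, (∑' m : A, dSeq μ (ν ((m : ℤ) - (n : ℤ))) W) < 2 := by
  obtain ⟨σ, rfl⟩ : ∃ σ : Equiv.Perm X, ⇑σ = f := ⟨.ofBijective f hsys.2.2.1, rfl⟩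
  have : SigmaFinite μ := hsys.1
  have hσ := hsys.mem_nonsingularPerms
  refine ⟨?_, fun n hn => ?_⟩
  · have hr : 0 < p.toReal := ENNReal.toReal_pos (zero_lt_one.trans_le Fact.out).ne' hp
    rw [hA]
    refine hφ {ψ | ‖ψ - indicatorConstLp p hWm hWfin 1‖ ^ p.toReal < (μ W).toReal / 2 ^ p.toReal}
      (isOpen_lt ((continuous_id.sub continuous_const).norm.rpow_const fun _ => .inr hr.le)
        continuous_const) ⟨indicatorConstLp p hWm hWfin 1, ?_⟩
    simp [Real.zero_rpow hr.ne', ENNReal.toReal_pos hW0.ne' hWfin, Real.rpow_pos_of_pos]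
  have hA' (m : ℕ) (hm : m ∈ A) :
      ∫⁻ x, ‖(T ^ m) φ x - W.indicator 1 x‖ₑ ^ p.toReal ∂μ < μ W / 2 ^ p.toReal := by
    rw [hA] at hm
    exact (norm_sub_indicatorConstLp_rpow_lt_iff hp hWm hWfin _).1 hm
  obtain rfl := funext (map_zpow_neg_eq hσ hν)
  exact tsum_dSeq_map_zpow_lt_two hσ hp hT hWm hWw hW0.ne' φ hA' hn
end
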